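/- arXiv:2105.03872 — 6 statements merged into one kernel-verified Lean document; each statement's English description precedes it below -/
import Mathlib

section
/- Let S = k[x_0, …, x_n, y_0, …, y_n] and let I be the ideal generated by the n binomials h_i = x_{i−1}·y_{i−1} − x_i·y_i for i = 1, …, n. Then I is a prime ideal of S. -/
/-!
The ideal is the kernel of the monomial map `k[x, y] → k[t, X_0, …, X_n]` given by
`x_i ↦ X_i`, `y_i ↦ t ∏_{j ≠ i} X_j`, whose target is a domain. Every `x_i y_i` maps to
`t ∏_j X_j`, so the generators lie in the kernel. Conversely, trading `x_i y_i` for `x_n y_n`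
rewrites every monomial modulo the ideal into a normal one, in which `x_i` and `y_i` never occur
together for `i < n`. On normal monomials the exponent map is injective: the `t`-degree is the
total `y`-degree and the `X_j`-degree then determines `deg_{x_j} - deg_{y_j}`. Hence a kernel
element in normal form vanishes.
-/

open MvPolynomial

namespace MvPolynomial

section MonomialMap

variable {σ τ R : Type*}

theorem aeval_monomial_monomial_one [CommSemiring R] (e : σ → τ →₀ ℕ) (d : σ →₀ ℕ)
    (r : R) :
    aeval (fun s => monomial (e s) (1 : R)) (monomial d r) =
      monomial (Finsupp.linearCombination ℕ e d) r := by
  rw [aeval_monomial, Finsupp.linearCombination_apply, monomial_finsupp_sum_index,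
    algebraMap_eq]
  simp only [monomial_pow, one_pow]

theorem eq_zero_of_aeval_monomial_monomial_one_eq_zero [CommSemiring R] {e : σ → τ →₀ ℕ}
    {p : MvPolynomial σ R} (hinj : Set.InjOn (Finsupp.linearCombination ℕ e) p.support)
    (hp : aeval (fun s => monomial (e s) (1 : R)) p = 0) : p = 0 := by
  classical
  ext d
  by_cases hd : d ∈ p.support
  · have hcoeff : coeff (Finsupp.linearCombination ℕ e d)
        (aeval (fun s => monomial (e s) (1 : R)) p) = coeff d p := by
      conv_lhs => rw [p.as_sum, map_sum]
      rw [coeff_sum, Finset.sum_eq_single_of_mem d hd]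
      · rw [aeval_monomial_monomial_one, coeff_monomial, if_pos rfl]
      · intro d' hd' hne
        rw [aeval_monomial_monomial_one, coeff_monomial,
          if_neg fun h => hne (hinj hd' hd h)]
    rw [← hcoeff, hp, coeff_zero, coeff_zero]
  · simpa using hd

theorem exists_support_subset_sub_mem [CommRing R] {I : Ideal (MvPolynomial σ R)}
    {N : Set (σ →₀ ℕ)} (hN : ∀ d, ∃ d' ∈ N, monomial d 1 - monomial d' 1 ∈ I)
    (p : MvPolynomial σ R) : ∃ r : MvPolynomial σ R, ↑r.support ⊆ N ∧ p - r ∈ I := by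
  classical
  induction p using MvPolynomial.induction_on' with
  | monomial d a =>
    obtain ⟨d', hd', hmem⟩ := hN d
    refine ⟨monomial d' a, fun x hx => ?_, ?_⟩
    · rwa [Finset.mem_singleton.mp (support_monomial_subset hx)]
    · simpa [mul_sub, C_mul_monomial] using I.mul_mem_left (C a) hmem
  | add p q hp hq =>
    obtain ⟨r, hr, hpr⟩ := hp
    obtain ⟨s, hs, hqs⟩ := hq
    refine ⟨r + s, fun x hx => ?_, by simpa [add_sub_add_comm] using I.add_mem hpr hqs⟩
    rcases Finset.mem_union.mp (support_add hx) with h | h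
    exacts [hr h, hs h]

theorem ker_aeval_monomial_monomial_one_eq [CommRing R] {e : σ → τ →₀ ℕ}
    {I : Ideal (MvPolynomial σ R)} (N : Set (σ →₀ ℕ))
    (hI : I ≤ RingHom.ker (aeval (fun s => monomial (e s) (1 : R))))
    (hinj : Set.InjOn (Finsupp.linearCombination ℕ e) N)
    (hN : ∀ d, ∃ d' ∈ N, monomial d 1 - monomial d' 1 ∈ I) :
    RingHom.ker (aeval (fun s => monomial (e s) (1 : R))) = I := by
  refine le_antisymm (fun p hp => ?_) hI
  obtain ⟨r, hrN, hpr⟩ := exists_support_subset_sub_mem hN p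
  have hr : r ∈ RingHom.ker (aeval (fun s => monomial (e s) (1 : R))) := by
    simpa using Ideal.sub_mem _ hp (hI hpr)
  rw [eq_zero_of_aeval_monomial_monomial_one_eq_zero (hinj.mono hrN) hr, sub_zero] at hpr
  exact hpr

end MonomialMap

end MvPolynomial

namespace StandardCremona

open Finsupp

variable (k : Type*) [CommRing k] (n : ℕ)

noncomputable def graphIdeal : Ideal (MvPolynomial (Fin (n + 1) ⊕ Fin (n + 1)) k) :=
  Ideal.span {p : MvPolynomial (Fin (n + 1) ⊕ Fin (n + 1)) k |
    ∃ i : Fin n,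
      p = X (Sum.inl i.castSucc) * X (Sum.inr i.castSucc)
          - X (Sum.inl i.succ) * X (Sum.inr i.succ)}

/-- `x_i ↦ X_i` and `y_i ↦ t ∏_{j ≠ i} X_j`, where `none` indexes `t` and `some j` indexes
`X_j`. -/
noncomputable def exponent : Fin (n + 1) ⊕ Fin (n + 1) → Option (Fin (n + 1)) →₀ ℕ
  | .inl i => equivFunOnFinite.symm fun o => if o = some i then 1 else 0
  | .inr i => equivFunOnFinite.symm fun o => if o = some i then 0 else 1

variable {n}

theorem exponent_inl_apply (i : Fin (n + 1)) (o : Option (Fin (n + 1))) :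
    exponent n (.inl i) o = if o = some i then 1 else 0 := rfl

theorem exponent_inr_apply (i : Fin (n + 1)) (o : Option (Fin (n + 1))) :
    exponent n (.inr i) o = if o = some i then 0 else 1 := rfl

theorem exponent_inl_add_exponent_inr (i j : Fin (n + 1)) :
    exponent n (.inl i) + exponent n (.inr i) = exponent n (.inl j) + exponent n (.inr j) := by
  ext o
  simp only [Finsupp.coe_add, Pi.add_apply, exponent_inl_apply, exponent_inr_apply]
  split_ifs <;> rfl

theorem linearCombination_exponent_apply (d : Fin (n + 1) ⊕ Fin (n + 1) →₀ ℕ)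
    (o : Option (Fin (n + 1))) :
    linearCombination ℕ (exponent n) d o = ∑ s, d s * exponent n s o := by
  rw [linearCombination_apply, Finsupp.sum_fintype _ (fun i a => a • exponent n i)
    fun _ => zero_smul ℕ _, finsetSum_apply]
  rfl

theorem linearCombination_exponent_none (d : Fin (n + 1) ⊕ Fin (n + 1) →₀ ℕ) :
    linearCombination ℕ (exponent n) d none = ∑ i, d (.inr i) := by
  simp [linearCombination_exponent_apply, Fintype.sum_sum_type, exponent_inl_apply,
    exponent_inr_apply]

theorem linearCombination_exponent_some_add (d : Fin (n + 1) ⊕ Fin (n + 1) →₀ ℕ)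
    (j : Fin (n + 1)) :
    linearCombination ℕ (exponent n) d (some j) + d (.inr j) =
      d (.inl j) + linearCombination ℕ (exponent n) d none := by
  rw [linearCombination_exponent_none, linearCombination_exponent_apply, Fintype.sum_sum_type]
  simp only [exponent_inl_apply, exponent_inr_apply, Option.some.injEq, mul_ite, mul_one,
    mul_zero, Finset.sum_ite_eq, Finset.mem_univ, if_true]
  rw [add_assoc, Finset.sum_ite, Finset.sum_const_zero, zero_add, Finset.filter_ne,
    Finset.sum_erase_add _ _ (Finset.mem_univ j)]

def IsNormal (d : Fin (n + 1) ⊕ Fin (n + 1) →₀ ℕ) : Prop :=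
  ∀ i : Fin n, d (.inl i.castSucc) = 0 ∨ d (.inr i.castSucc) = 0

theorem injOn_linearCombination_exponent :
    Set.InjOn (linearCombination ℕ (exponent n)) {d | IsNormal d} := by
  intro d hd d' hd' h
  have hsome (j : Fin (n + 1)) : d (.inl j) + d' (.inr j) = d' (.inl j) + d (.inr j) := by
    have h₁ := linearCombination_exponent_some_add d j
    have h₂ := linearCombination_exponent_some_add d' j
    rw [h] at h₁
    omega
  have hcastSucc (i : Fin n) :
      d (.inl i.castSucc) = d' (.inl i.castSucc) ∧
        d (.inr i.castSucc) = d' (.inr i.castSucc) := by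
    have := hsome i.castSucc
    rcases hd i with h₁ | h₁ <;> rcases hd' i with h₂ | h₂ <;> omega
  have hlast : d (.inr (Fin.last n)) = d' (.inr (Fin.last n)) := by
    have hsum := linearCombination_exponent_none d
    rw [h, linearCombination_exponent_none, Fin.sum_univ_castSucc, Fin.sum_univ_castSucc,
      Finset.sum_congr rfl fun i _ => (hcastSucc i).2] at hsum
    omega
  ext (j | j) <;> induction j using Fin.lastCases with
  | last => have := hsome (Fin.last n); omega
  | cast i => first | exact (hcastSucc i).1 | exact (hcastSucc i).2

variable {k}

theorem graphIdeal_le_ker :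
    graphIdeal k n ≤ RingHom.ker (aeval fun s => monomial (exponent n s) (1 : k)) := by
  rw [graphIdeal, Ideal.span_le]
  rintro _ ⟨i, rfl⟩
  simp [monomial_mul, exponent_inl_add_exponent_inr i.castSucc i.succ]

noncomputable def xyExponent (j : Fin (n + 1)) : Fin (n + 1) ⊕ Fin (n + 1) →₀ ℕ :=
  single (.inl j) 1 + single (.inr j) 1

theorem monomial_xyExponent (j : Fin (n + 1)) :
    monomial (xyExponent j) (1 : k) = X (.inl j) * X (.inr j) := by
  rw [xyExponent, ← one_mul (1 : k), ← monomial_mul]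
  rfl

variable (k) in
theorem monomial_add_xyExponent_sub_mem (d : Fin (n + 1) ⊕ Fin (n + 1) →₀ ℕ)
    (j : Fin (n + 1)) :
    monomial (d + xyExponent j) (1 : k) - monomial (d + xyExponent (Fin.last n)) 1 ∈
      graphIdeal k n := by
  suffices h : X (.inl j) * X (.inr j) - X (.inl (Fin.last n)) * X (.inr (Fin.last n)) ∈
      graphIdeal k n by
    rw [← monomial_xyExponent, ← monomial_xyExponent] at h
    simpa only [mul_sub, monomial_mul, mul_one] using
      (graphIdeal k n).mul_mem_left (monomial d 1) h
  induction j using Fin.reverseInduction with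
  | last => simp
  | cast i ih =>
    have hgen : X (.inl i.castSucc) * X (.inr i.castSucc) - X (.inl i.succ) * X (.inr i.succ) ∈
        graphIdeal k n := Ideal.subset_span ⟨i, rfl⟩
    simpa using add_mem hgen ih

-- Trading `x_i y_i` (`i < n`) for `x_n y_n` lowers the weight by one.
def weight (d : Fin (n + 1) ⊕ Fin (n + 1) →₀ ℕ) : ℕ :=
  ∑ i : Fin n, d (.inr i.castSucc)

theorem weight_add (d d' : Fin (n + 1) ⊕ Fin (n + 1) →₀ ℕ) :
    weight (d + d') = weight d + weight d' := by
  simp [weight, Finset.sum_add_distrib]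

theorem weight_xyExponent_castSucc (i : Fin n) : weight (xyExponent i.castSucc) = 1 := by
  simp [weight, xyExponent, single_apply, Fin.castSucc_inj]

theorem weight_xyExponent_last : weight (xyExponent (Fin.last n)) = 0 := by
  simp [weight, xyExponent, (Fin.castSucc_lt_last _).ne]

variable (k) in
theorem exists_isNormal_monomial_sub_mem (d : Fin (n + 1) ⊕ Fin (n + 1) →₀ ℕ) :
    ∃ d' ∈ {d | IsNormal d}, monomial d (1 : k) - monomial d' 1 ∈ graphIdeal k n := by
  induction hw : weight d using Nat.strong_induction_on generalizing d with
  | _ w ih =>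
  by_cases hd : IsNormal d
  · exact ⟨d, hd, by simp⟩
  obtain ⟨i, hx, hy⟩ :
      ∃ i : Fin n, d (.inl i.castSucc) ≠ 0 ∧ d (.inr i.castSucc) ≠ 0 := by
    simpa [IsNormal, not_or] using hd
  have hle : xyExponent i.castSucc ≤ d := by
    rintro (j | j) <;> rcases eq_or_ne i.castSucc j with rfl | hj <;>
      simp [xyExponent, Nat.one_le_iff_ne_zero, *]
  set d₁ := d - xyExponent i.castSucc
  have hd₁ : d₁ + xyExponent i.castSucc = d := tsub_add_cancel_of_le hle
  have hlt : weight (d₁ + xyExponent (Fin.last n)) < w := by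
    rw [← hw, ← hd₁, weight_add, weight_add, weight_xyExponent_castSucc,
      weight_xyExponent_last]
    omega
  obtain ⟨d', hd', hmem⟩ := ih _ hlt _ rfl
  refine ⟨d', hd', ?_⟩
  have hstep := monomial_add_xyExponent_sub_mem k d₁ i.castSucc
  rw [hd₁] at hstep
  simpa using add_mem hstep hmem

end StandardCremona

theorem standard_cremona_graph_ideal_isPrime_general
    (k : Type*) [Field k] (n : ℕ) :
    (Ideal.span {p : MvPolynomial (Fin (n + 1) ⊕ Fin (n + 1)) k |
        ∃ i : Fin n,
          p = X (Sum.inl i.castSucc) * X (Sum.inr i.castSucc)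
              - X (Sum.inl i.succ) * X (Sum.inr i.succ)}).IsPrime := by
  change (StandardCremona.graphIdeal k n).IsPrime
  rw [← ker_aeval_monomial_monomial_one_eq _ StandardCremona.graphIdeal_le_ker
    StandardCremona.injOn_linearCombination_exponent
    (StandardCremona.exists_isNormal_monomial_sub_mem k)]
  exact RingHom.ker_isPrime _

/-- In `S = k[x_0, …, x_n, y_0, …, y_n]`, the ideal generated by the `n`
binomials `h_i = x_{i-1} y_{i-1} - x_i y_i` (`i = 1, …, n`) is prime.
Here the `x`-variables are indexed by `Sum.inl` and the `y`-variables by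
`Sum.inr`. -/
theorem standard_cremona_graph_ideal_isPrime
    (k : Type*) [Field k] (n : ℕ) (hn : 1 ≤ n) :
    (Ideal.span {p : MvPolynomial (Fin (n + 1) ⊕ Fin (n + 1)) k |
        ∃ i : Fin n,
          p = X (Sum.inl i.castSucc) * X (Sum.inr i.castSucc)
              - X (Sum.inl i.succ) * X (Sum.inr i.succ)}).IsPrime :=
  standard_cremona_graph_ideal_isPrime_general k n
end

section
/- Let S = k[x_0, …, x_{m+m'}, y_0, …, y_{m+m'}], let I_m be the ideal generated by x_{i−1}y_{i−1} − x_i y_i for 1 ≤ i ≤ m, and let I_{m'} be the ideal generated by x_{j−1}y_{j−1} − x_j y_j for m+1 ≤ j ≤ m+m'. Then I_m ∩ I_{m'} = I_m · I_{m'}. -/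
/-!
Write `z_t = x_t y_t` and `c = m`. Let `T` be the `k`-linear map sending a monomial to the monomial
obtained by replacing, for every `t > c`, the largest power of `z_t` dividing it by the same power
of `z_c`. Then `T` commutes with multiplication by `z_t` for `t ≤ c`, hence with the generators of
`I_m`, and turns multiplication by `z_t` for `t ≥ c` into multiplication by `z_c`, hence kills
`I_{m'}`. Since `z_t ≡ z_c` modulo `I_{m'}` for `t > c`, also `p - T p ∈ I_{m'}` for every `p`.
So if `f = ∑ gᵢ rᵢ ∈ I_{m'}` with generators `gᵢ` of `I_m`, then
`f = f - T f = ∑ gᵢ (rᵢ - T rᵢ) ∈ I_m · I_{m'}`.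
-/

open MvPolynomial

namespace Ideal

variable {R F : Type*} [CommRing R] [FunLike F R R] [AddMonoidHomClass F R R]

theorem map_eq_zero_of_mem_span {t : Set R} (T : F) (ht : ∀ g ∈ t, ∀ p, T (g * p) = 0)
    {f : R} (hf : f ∈ span t) : T f = 0 := by
  suffices ∀ p, T (f * p) = 0 by simpa using this 1
  induction hf using Submodule.span_induction with
  | mem g hg => exact ht g hg
  | zero => simp
  | add x y _ _ hx hy => intro p; rw [add_mul, map_add, hx, hy, add_zero]
  | smul r x _ hx => intro p; rw [smul_eq_mul, mul_assoc, mul_left_comm, hx]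

theorem span_inf_le_mul_of_map {s : Set R} {J : Ideal R} (T : F)
    (hs : ∀ g ∈ s, ∀ p, T (g * p) = g * T p) (hJ : ∀ f ∈ J, T f = 0)
    (hT : ∀ p, p - T p ∈ J) : span s ⊓ J ≤ span s * J := by
  have key : ∀ f ∈ span s, ∀ p, f * p - T (f * p) ∈ span s * J := by
    intro f hf
    induction hf using Submodule.span_induction with
    | mem g hg => intro p; rw [hs g hg, ← mul_sub]; exact mul_mem_mul (subset_span hg) (hT p)
    | zero => simp
    | add x y _ _ hx hy =>
      intro p; rw [add_mul, map_add, add_sub_add_comm]; exact add_mem (hx p) (hy p)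
    | smul r x _ hx => intro p; rw [smul_eq_mul, mul_assoc, mul_left_comm r]; exact hx (r * p)
  rintro f ⟨hfs, hfJ⟩
  simpa [hJ f hfJ] using key f hfs 1

theorem prod_pow_sub_pow_sum_mem {ι : Type*} {J : Ideal R} {U : Finset ι} {a : ι → R} {b : R}
    (h : ∀ t ∈ U, a t - b ∈ J) (e : ι → ℕ) : ∏ t ∈ U, a t ^ e t - b ^ ∑ t ∈ U, e t ∈ J := by
  rw [← Quotient.eq, map_prod, ← Finset.prod_pow_eq_pow_sum, map_prod]
  exact Finset.prod_congr rfl fun t ht => by rw [map_pow, map_pow, Quotient.eq.mpr (h t ht)]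

theorem sub_mem_of_forall_sub_succ_mem {J : Ideal R} {a : ℕ → R} {r : ℕ}
    (h : ∀ j < r, a j - a (j + 1) ∈ J) : a 0 - a r ∈ J := by
  rw [← Finset.sum_range_sub']
  exact J.sum_mem fun j hj => h j (Finset.mem_range.1 hj)

end Ideal

namespace MvPolynomial

section mapExponents

variable {σ R : Type*}

noncomputable def mapExponents [CommSemiring R] (f : (σ →₀ ℕ) → σ →₀ ℕ) :
    MvPolynomial σ R →ₗ[R] MvPolynomial σ R :=
  (basisMonomials σ R).constr R fun d => monomial (f d) 1

variable {f : (σ →₀ ℕ) → σ →₀ ℕ}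

@[simp]
theorem mapExponents_monomial [CommSemiring R] (d : σ →₀ ℕ) (a : R) :
    mapExponents f (monomial d a) = monomial (f d) a := by
  have hd : basisMonomials σ R d = monomial d 1 := congrFun (coe_basisMonomials σ R) d
  rw [← mul_one a, ← smul_eq_mul, ← smul_monomial, map_smul, mapExponents, ← hd,
    Module.Basis.constr_basis, smul_monomial]

theorem mapExponents_monomial_mul [CommSemiring R] {a b : σ →₀ ℕ} (h : ∀ d, f (d + a) = f d + b)
    (p : MvPolynomial σ R) :
    mapExponents f (monomial a 1 * p) = monomial b 1 * mapExponents f p := by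
  induction p using induction_on' with
  | monomial u r =>
    simp only [monomial_mul, one_mul, mapExponents_monomial, add_comm a, h, add_comm b]
  | add p q hp hq => rw [mul_add, map_add, hp, hq, map_add, mul_add]

theorem sub_mapExponents_mem [CommRing R] {J : Ideal (MvPolynomial σ R)}
    (h : ∀ d, monomial d 1 - monomial (f d) 1 ∈ J) (p : MvPolynomial σ R) :
    p - mapExponents f p ∈ J := by
  induction p using induction_on' with
  | monomial u r =>
    rw [mapExponents_monomial, ← mul_one r, ← smul_eq_mul, ← smul_monomial, ← smul_monomial,
      ← smul_sub, smul_eq_C_mul]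
    exact J.mul_mem_left _ (h u)
  | add p q hp hq => rw [map_add, add_sub_add_comm]; exact add_mem hp hq

end mapExponents

noncomputable section diagonal

variable {ι : Type*}

def diagExp (t : ι) : ι ⊕ ι →₀ ℕ :=
  Finsupp.single (Sum.inl t) 1 + Finsupp.single (Sum.inr t) 1

theorem monomial_diagExp {R : Type*} [CommSemiring R] (t : ι) :
    monomial (diagExp t) (1 : R) = X (Sum.inl t) * X (Sum.inr t) := by
  rw [diagExp, X, X, monomial_mul, one_mul]

variable [DecidableEq ι]

def diagMult (d : ι ⊕ ι →₀ ℕ) (t : ι) : ℕ :=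
  min (d (Sum.inl t)) (d (Sum.inr t))

def diagPart (U : Finset ι) (d : ι ⊕ ι →₀ ℕ) : ι ⊕ ι →₀ ℕ :=
  ∑ t ∈ U, diagMult d t • diagExp t

def transferExp (U : Finset ι) (c : ι) (d : ι ⊕ ι →₀ ℕ) : ι ⊕ ι →₀ ℕ :=
  d - diagPart U d + (∑ t ∈ U, diagMult d t) • diagExp c

variable {U : Finset ι} {c : ι}

theorem diagPart_le (U : Finset ι) (d : ι ⊕ ι →₀ ℕ) : diagPart U d ≤ d := by
  intro v
  cases v <;> simp [diagPart, diagExp, diagMult, Finsupp.finsetSum_apply, Finsupp.single_apply]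
  all_goals split_ifs <;> omega

theorem diagMult_add_diagExp (d : ι ⊕ ι →₀ ℕ) (t s : ι) :
    diagMult (d + diagExp t) s = diagMult d s + if s = t then 1 else 0 := by
  rcases eq_or_ne s t with rfl | hst
  · simp [diagMult, diagExp, min_add_add_right]
  · simp [diagMult, diagExp, hst]

theorem transferExp_add_diagExp (d : ι ⊕ ι →₀ ℕ) (t : ι) :
    transferExp U c (d + diagExp t) = transferExp U c d + diagExp (if t ∈ U then c else t) := by
  have hle := diagPart_le U d
  simp only [transferExp, diagPart, diagMult_add_diagExp, add_smul, ite_smul, one_smul, zero_smul,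
    Finset.sum_add_distrib, Finset.sum_ite_eq'] at hle ⊢
  by_cases ht : t ∈ U
  · simp only [ht, if_true, add_tsub_add_eq_tsub_right, add_assoc]
  · simp only [ht, if_false, add_zero]
    rw [← tsub_add_eq_add_tsub hle, add_right_comm]

variable {R : Type*}

theorem mapExponents_transferExp_mul [CommSemiring R] (t : ι) (p : MvPolynomial (ι ⊕ ι) R) :
    mapExponents (transferExp U c) (X (Sum.inl t) * X (Sum.inr t) * p) =
      X (Sum.inl (if t ∈ U then c else t)) * X (Sum.inr (if t ∈ U then c else t)) *
        mapExponents (transferExp U c) p := by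
  rw [← monomial_diagExp, ← monomial_diagExp]
  exact mapExponents_monomial_mul (fun d => transferExp_add_diagExp d t) p

theorem monomial_sub_monomial_transferExp_mem [CommRing R] {J : Ideal (MvPolynomial (ι ⊕ ι) R)}
    (h : ∀ t ∈ U, X (Sum.inl t) * X (Sum.inr t) - X (Sum.inl c) * X (Sum.inr c) ∈ J)
    (d : ι ⊕ ι →₀ ℕ) : monomial d 1 - monomial (transferExp U c d) 1 ∈ J := by
  have hd : monomial d (1 : R) = (∏ t ∈ U, (X (Sum.inl t) * X (Sum.inr t)) ^ diagMult d t) *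
      monomial (d - diagPart U d) 1 := by
    simp only [← monomial_diagExp, monomial_pow, one_pow, ← monomial_sum_one, monomial_mul,
      mul_one]
    rw [← diagPart, add_tsub_cancel_of_le (diagPart_le U d)]
  have hc : monomial (transferExp U c d) (1 : R) =
      (X (Sum.inl c) * X (Sum.inr c)) ^ (∑ t ∈ U, diagMult d t) *
        monomial (d - diagPart U d) 1 := by
    rw [← monomial_diagExp, monomial_pow, monomial_mul, one_pow, mul_one, transferExp, add_comm]
  rw [hd, hc, ← sub_mul]
  exact J.mul_mem_right _ (Ideal.prod_pow_sub_pow_sum_mem h _)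

end diagonal

theorem mapExponents_transferExp_Ioi_mul {ι R : Type*} [LinearOrder ι] [LocallyFiniteOrderTop ι]
    [CommSemiring R] (c t : ι) (p : MvPolynomial (ι ⊕ ι) R) :
    mapExponents (transferExp (Finset.Ioi c) c) (X (Sum.inl t) * X (Sum.inr t) * p) =
      X (Sum.inl (min t c)) * X (Sum.inr (min t c)) *
        mapExponents (transferExp (Finset.Ioi c) c) p := by
  have hmin : (if t ∈ Finset.Ioi c then c else t) = min t c := by
    split_ifs with h
    · exact (min_eq_right (Finset.mem_Ioi.1 h).le).symm
    · exact (min_eq_left (not_lt.1 (mt Finset.mem_Ioi.2 h))).symm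
  rw [mapExponents_transferExp_mul, hmin]

end MvPolynomial

theorem X_mul_X_sub_mem_span_of_le {R : Type*} [CommRing R] {m m' : ℕ} {t : Fin (m + m' + 1)}
    (ht : m ≤ (t : ℕ)) :
    X (Sum.inl t) * X (Sum.inr t) - X (Sum.inl ⟨m, by omega⟩) * X (Sum.inr ⟨m, by omega⟩) ∈
      Ideal.span {p : MvPolynomial (Fin (m + m' + 1) ⊕ Fin (m + m' + 1)) R | ∃ j : Fin m',
        p = X (Sum.inl ⟨m + j.1, by omega⟩) * X (Sum.inr ⟨m + j.1, by omega⟩)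
          - X (Sum.inl ⟨m + j.1 + 1, by omega⟩) * X (Sum.inr ⟨m + j.1 + 1, by omega⟩)} := by
  let z (j : ℕ) : MvPolynomial (Fin (m + m' + 1) ⊕ Fin (m + m' + 1)) R :=
    X (Sum.inl (Fin.clamp (m + j) (m + m'))) * X (Sum.inr (Fin.clamp (m + j) (m + m')))
  have hclamp (j : ℕ) (hj : j ≤ m') : Fin.clamp (m + j) (m + m') = ⟨m + j, by omega⟩ :=
    Fin.ext (by simp; omega)
  have hzt : z (t - m) = X (Sum.inl t) * X (Sum.inr t) := by
    simp only [z, show Fin.clamp (m + (t - m)) (m + m') = t from Fin.ext (by simp; omega)]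
  have hz0 : z 0 = X (Sum.inl ⟨m, by omega⟩) * X (Sum.inr ⟨m, by omega⟩) := by
    simp only [z, add_zero, show Fin.clamp m (m + m') = ⟨m, by omega⟩ from Fin.ext (by simp)]
  rw [← neg_mem_iff, neg_sub, ← hzt, ← hz0]
  refine Ideal.sub_mem_of_forall_sub_succ_mem fun j hj => Ideal.subset_span ⟨⟨j, by omega⟩, ?_⟩
  simp only [z, hclamp j (by omega), hclamp (j + 1) (by omega)]
  rfl

/-- In `S = k[x_0, …, x_{m+m'}, y_0, …, y_{m+m'}]`, let `I_m` be generated by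
`x_{i-1} y_{i-1} - x_i y_i` for `1 ≤ i ≤ m` and `I_{m'}` by
`x_{j-1} y_{j-1} - x_j y_j` for `m+1 ≤ j ≤ m+m'`.  Then `I_m ∩ I_{m'} = I_m · I_{m'}`.
The `x`-variables are indexed by `Sum.inl`, the `y`-variables by `Sum.inr`. -/
theorem intersection_eq_product_graph_ideals
    (k : Type*) [Field k] (m m' : ℕ)
    (Im Im' : Ideal (MvPolynomial (Fin (m + m' + 1) ⊕ Fin (m + m' + 1)) k))
    (hIm : Im = Ideal.span {p | ∃ i : Fin m,
      p = X (Sum.inl ⟨i.1, by omega⟩) * X (Sum.inr ⟨i.1, by omega⟩)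
          - X (Sum.inl ⟨i.1 + 1, by omega⟩) * X (Sum.inr ⟨i.1 + 1, by omega⟩)})
    (hIm' : Im' = Ideal.span {p | ∃ j : Fin m',
      p = X (Sum.inl ⟨m + j.1, by omega⟩) * X (Sum.inr ⟨m + j.1, by omega⟩)
          - X (Sum.inl ⟨m + j.1 + 1, by omega⟩) * X (Sum.inr ⟨m + j.1 + 1, by omega⟩)}) :
    Im ⊓ Im' = Im * Im' := by
  set c : Fin (m + m' + 1) := ⟨m, by omega⟩
  refine le_antisymm ?_ Ideal.mul_le_inf
  subst hIm hIm'
  refine Ideal.span_inf_le_mul_of_map (mapExponents (transferExp (Finset.Ioi c) c)) ?_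
    (fun f hf => Ideal.map_eq_zero_of_mem_span _ ?_ hf)
    (sub_mapExponents_mem (monomial_sub_monomial_transferExp_mem fun t ht =>
      X_mul_X_sub_mem_span_of_le (Fin.lt_def.1 (Finset.mem_Ioi.1 ht)).le))
  · rintro g ⟨i, rfl⟩ p
    rw [sub_mul, map_sub, mapExponents_transferExp_Ioi_mul, mapExponents_transferExp_Ioi_mul,
      min_eq_left, min_eq_left, sub_mul] <;> simp [c, Fin.le_def]
  · rintro g ⟨j, rfl⟩ p
    rw [sub_mul, map_sub, mapExponents_transferExp_Ioi_mul, mapExponents_transferExp_Ioi_mul,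
      min_eq_right, min_eq_right, sub_self] <;> simp [c, Fin.le_def]
    omega
end

section
/- The ideal of n-minors of the (n+1)×n matrix Φ with entries Φ_{i,j} = x_{j−1} if i = j, Φ_{i,j} = −x_j if i = j+1, and 0 otherwise (indices 1 ≤ i ≤ n+1, 1 ≤ j ≤ n), equals the ideal (x_1⋯x_n, x_0 x_2⋯x_n, …, x_0⋯x_{n−1}) generated by the squarefree monomials of degree n in x_0, …, x_n. -/
/-!
Deleting row `i` of `Φ` leaves a matrix whose first `i` rows are lower bidiagonal and whose
remaining rows are upper bidiagonal, with no entries linking the two blocks. Listing the first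
block in reverse order makes the whole minor triangular, so it is the product of its diagonal,
`± ∏_{j ≠ i} x_j`. Generators that agree up to units span the same ideal.
-/

open MvPolynomial Finset

namespace Matrix

variable {m R α : Type*} [Fintype m] [DecidableEq m] [CommRing R] [LinearOrder α]

theorem det_of_blockTriangular_injective {M : Matrix m m R} {b : m → α}
    (hb : Function.Injective b) (h : M.BlockTriangular b) : M.det = ∏ i, M i i := by
  let := LinearOrder.lift' b hb
  convert det_of_isUpperTriangular h

end Matrix

theorem Ideal.span_setOf_eq_of_associated {ι R : Type*} [CommSemiring R] {f g : ι → R}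
    (h : ∀ i, Associated (f i) (g i)) :
    Ideal.span {p | ∃ i, p = f i} = Ideal.span {p | ∃ i, p = g i} := by
  apply le_antisymm <;> rw [Ideal.span_le] <;> rintro p ⟨i, rfl⟩
  · exact Ideal.mem_of_dvd _ (h i).symm.dvd (Ideal.subset_span ⟨i, rfl⟩)
  · exact Ideal.mem_of_dvd _ (h i).dvd (Ideal.subset_span ⟨i, rfl⟩)

theorem Fin.prod_ite_castSucc_lt_one_neg_one {R : Type*} [CommMonoid R] [HasDistribNeg R]
    {n : ℕ} (i : Fin (n + 1)) :
    ∏ r : Fin n, (if r.castSucc < i then (1 : R) else -1) = (-1) ^ (n - i) := by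
  have hcard : #{r : Fin n | ¬ r.castSucc < i} = n - i := by
    have := card_filter_val_lt (n := n) (m := i)
    rw [filter_not, card_sdiff_of_subset (filter_subset _ _), card_univ, Fintype.card_fin]
    simp only [Fin.lt_def, Fin.val_castSucc]
    omega
  rw [prod_ite, prod_const_one, one_mul, Finset.prod_const, hcard]

section CremonaHilbertBurch

variable {R : Type*} [CommRing R] {n : ℕ}

def cremonaHilbertBurch (x : Fin (n + 1) → R) : Matrix (Fin (n + 1)) (Fin n) R :=
  fun i j => if i = j.castSucc then x j.castSucc else if i = j.succ then -x j.succ else 0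

variable (x : Fin (n + 1) → R) (i : Fin (n + 1))

theorem cremonaHilbertBurch_succAbove_self (r : Fin n) :
    cremonaHilbertBurch x (i.succAbove r) r
      = (if r.castSucc < i then 1 else -1) * x (i.succAbove r) := by
  by_cases h : r.castSucc < i
  · simp [cremonaHilbertBurch, Fin.succAbove_of_castSucc_lt _ _ h, h]
  · simp [cremonaHilbertBurch, Fin.succAbove_of_le_castSucc _ _ (not_lt.mp h), h,
      (Fin.castSucc_lt_succ (i := r)).ne']

theorem cremonaHilbertBurch_submatrix_blockTriangular :
    ((cremonaHilbertBurch x).submatrix i.succAbove id).BlockTriangular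
      fun r => if r.castSucc < i then -(r : ℤ) else r := by
  intro r c hrc
  simp only [Matrix.submatrix_apply, id, cremonaHilbertBurch, Fin.succAbove, Fin.ext_iff,
    apply_ite Fin.val, Fin.val_castSucc, Fin.val_succ, Fin.lt_def] at hrc ⊢
  rw [if_neg, if_neg] <;> split_ifs at hrc ⊢ <;> omega

theorem det_cremonaHilbertBurch_submatrix_succAbove :
    ((cremonaHilbertBurch x).submatrix i.succAbove id).det
      = (-1) ^ (n - i) * ∏ j ∈ univ \ {i}, x j := by
  have hinj : Function.Injective fun r : Fin n => if r.castSucc < i then -(r : ℤ) else r := by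
    intro r s hrs
    simp only [Fin.lt_def, Fin.val_castSucc] at hrs
    ext
    split_ifs at hrs <;> omega
  rw [Matrix.det_of_blockTriangular_injective hinj
      (cremonaHilbertBurch_submatrix_blockTriangular x i), ← compl_eq_univ_sdiff,
    ← Fin.image_succAbove_univ, prod_image Fin.succAbove_right_injective.injOn]
  simp only [Matrix.submatrix_apply, id, cremonaHilbertBurch_succAbove_self, prod_mul_distrib,
    Fin.prod_ite_castSucc_lt_one_neg_one]

end CremonaHilbertBurch

theorem standard_cremona_maximal_minors_general
    (k : Type*) [Field k] (n : ℕ)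
    (Φ : Matrix (Fin (n + 1)) (Fin n) (MvPolynomial (Fin (n + 1)) k))
    (hΦ : ∀ (i : Fin (n + 1)) (j : Fin n),
      Φ i j = if i = j.castSucc then X j.castSucc
        else if i = j.succ then -X j.succ else 0) :
    Ideal.span {p : MvPolynomial (Fin (n + 1)) k |
        ∃ i : Fin (n + 1), p = (Φ.submatrix i.succAbove id).det}
      = Ideal.span {p : MvPolynomial (Fin (n + 1)) k |
          ∃ i : Fin (n + 1), p = ∏ j ∈ Finset.univ \ {i}, X j} := by
  obtain rfl : Φ = cremonaHilbertBurch X := Matrix.ext hΦ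
  refine Ideal.span_setOf_eq_of_associated fun i => ?_
  rw [det_cremonaHilbertBurch_submatrix_succAbove]
  exact associated_unit_mul_left _ _ (isUnit_neg_one.pow _)

/-- The ideal of `n`-minors (maximal minors, obtained by deleting one row) of
the `(n+1) × n` bidiagonal Hilbert–Burch matrix of the standard Cremona map,
with entries `x_j` at position `(j, j)` and `-x_{j+1}` at position `(j+1, j)`,
equals the ideal generated by the squarefree monomials of degree `n` in
`x_0, …, x_n`. -/
theorem standard_cremona_maximal_minors
    (k : Type*) [Field k] (n : ℕ) (hn : 1 ≤ n)
    (Φ : Matrix (Fin (n + 1)) (Fin n) (MvPolynomial (Fin (n + 1)) k))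
    (hΦ : ∀ (i : Fin (n + 1)) (j : Fin n),
      Φ i j = if i = j.castSucc then X j.castSucc
        else if i = j.succ then -X j.succ else 0) :
    Ideal.span {p : MvPolynomial (Fin (n + 1)) k |
        ∃ i : Fin (n + 1), p = (Φ.submatrix i.succAbove id).det}
      = Ideal.span {p : MvPolynomial (Fin (n + 1)) k |
          ∃ i : Fin (n + 1), p = ∏ j ∈ Finset.univ \ {i}, X j} :=
  standard_cremona_maximal_minors_general k n Φ hΦ
end

section
/- Let P_1, …, P_n be polytopes in R^n and for each j let P_j^y ⊂ R^n × R^n be the Minkowski sum (P_j × {0}) + ({0} × S_n), where S_n is the unit simplex in R^n. Then the 2n-dimensional mixed volume MV_{2n}(P_1^y, …, P_n^y, S_n^y, …, S_n^y), with n copies of S_n^y = {0} × S_n, equals the n-dimensional mixed volume MV_n(P_1, …, P_n). -/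
open Pointwise MeasureTheory

/-- A polytope: the convex hull of a nonempty finite set. -/
def IsPolytope {V : Type*} [AddCommGroup V] [Module ℝ V] (P : Set V) : Prop :=
  ∃ S : Finset V, S.Nonempty ∧ P = convexHull ℝ (S : Set V)

/-- The mixed volume of a finite family of bodies, via inclusion–exclusion:
`MV(P_1,…,P_n) = ∑_{∅ ≠ I ⊆ {1,…,n}} (-1)^{n-|I|} Vol(∑_{i∈I} P_i)`;
with this normalization `MV(P,…,P) = n! Vol(P)` and `MV(S_n,…,S_n) = 1` for
the unit simplex `S_n`. -/
noncomputable def mixedVol {ι : Type*} [Fintype ι] {V : Type*} [AddCommGroup V]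
    [MeasureSpace V] (P : ι → Set V) : ℝ :=
  ∑ I ∈ Finset.univ.powerset, if I.Nonempty then
    (-1 : ℝ) ^ (Fintype.card ι - I.card) * (volume (∑ i ∈ I, P i)).toReal else 0

/-- The unit simplex `Conv{0, e_1, …, e_n} ⊂ ℝ^n`. -/
noncomputable def unitSimplex (n : ℕ) : Set (Fin n → ℝ) :=
  convexHull ℝ (insert 0 (Set.range fun i : Fin n => Pi.single i (1 : ℝ)))

open Finset

/-! For `A` a set of indices of the first block and `B` one of the second, the Minkowski sum
of the shifted bodies is the product `(∑_{j ∈ A} P_j) × (|A| + |B|) S_n`, whose volume is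
`vol(∑_{j ∈ A} P_j) (|A| + |B|)^n / n!`. Summing over `B` with the signs of the
inclusion–exclusion formula computes the `n`-th forward difference of `x ↦ (|A| + x)^n`, which
is `n!`; what remains is the inclusion–exclusion sum for `MV_n(P_1, …, P_n)`. The terms with
`A = ∅` vanish on both sides because `{0} ⊂ ℝ^n` is a null set. -/

theorem sum_neg_one_pow_mul_choose_mul_add_pow {R : Type*} [CommRing R] (m : ℕ) (a : R) :
    ∑ k ∈ range (m + 1), (-1) ^ (m - k) * m.choose k * (a + k) ^ m = m.factorial := by
  have h := congr_fun (fwdDiff_iter_eq_factorial (R := R) (n := m)) a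
  rw [fwdDiff_iter_eq_sum_shift] at h
  simpa [zsmul_eq_mul] using h

theorem sum_finset_neg_one_pow_mul_add_card_pow {R : Type*} [CommRing R] (κ : Type*)
    [Fintype κ] (a : R) :
    ∑ B : Finset κ, (-1) ^ (Fintype.card κ - #B) * (a + #B) ^ Fintype.card κ
      = (Fintype.card κ).factorial := by
  rw [← powerset_univ, sum_powerset_apply_card
      (fun b => (-1 : R) ^ (Fintype.card κ - b) * (a + b) ^ Fintype.card κ),
    card_univ, ← sum_neg_one_pow_mul_choose_mul_add_pow _ a]
  exact sum_congr rfl fun b _ => by rw [nsmul_eq_mul]; ring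

theorem Finset.sum_set_prod {ι V W : Type*} [AddCommMonoid V] [AddCommMonoid W]
    (s : Finset ι) (X : ι → Set V) (Y : ι → Set W) :
    ∑ i ∈ s, X i ×ˢ Y i = (∑ i ∈ s, X i) ×ˢ ∑ i ∈ s, Y i := by
  classical
  induction s using Finset.induction with
  | empty =>
    simp only [sum_empty, ← Set.singleton_zero, Set.singleton_prod_singleton]
    rfl
  | insert j s hj ih =>
    rw [sum_insert hj, sum_insert hj, sum_insert hj, ih, Set.prod_add_prod_comm]

theorem Convex.nsmul_eq_smul {V : Type*} [AddCommGroup V] [Module ℝ V] {s : Set V}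
    (hs : Convex ℝ s) (hne : s.Nonempty) (k : ℕ) : k • s = (k : ℝ) • s := by
  induction k with
  | zero => rw [zero_nsmul, Nat.cast_zero, Set.zero_smul_set hne]
  | succ k ih =>
    rw [succ_nsmul, ih, Nat.cast_succ, hs.add_smul k.cast_nonneg zero_le_one, one_smul]

theorem sum_disjSum_sumElim_prod {ι κ V W : Type*} [AddCommGroup V] [AddCommGroup W]
    [Module ℝ W] (P : ι → Set V) {S : Set W} (hS : Convex ℝ S) (hSne : S.Nonempty)
    (A : Finset ι) (B : Finset κ) :
    ∑ i ∈ A.disjSum B, Sum.elim (fun j => P j ×ˢ S) (fun _ => ({0} : Set V) ×ˢ S) i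
      = (∑ j ∈ A, P j) ×ˢ ((#A + #B : ℝ) • S) := by
  have hprod : Sum.elim (fun j => P j ×ˢ S) (fun _ : κ => ({0} : Set V) ×ˢ S)
      = fun i => Sum.elim P (fun _ => {0}) i ×ˢ S := by
    funext i; cases i <;> rfl
  rw [hprod, sum_set_prod, sum_disjSum, sum_const, card_disjSum, hS.nsmul_eq_smul hSne]
  simp [Set.singleton_zero]

theorem mixedVol_eq_sum {ι V : Type*} [Fintype ι] [AddCommGroup V] [MeasureSpace V]
    [NullSingletonClass (volume : Measure V)] (P : ι → Set V) :
    mixedVol P =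
      ∑ I : Finset ι, (-1 : ℝ) ^ (Fintype.card ι - #I) * (volume (∑ i ∈ I, P i)).toReal := by
  rw [mixedVol, powerset_univ]
  refine sum_congr rfl fun I _ => ?_
  split_ifs with hI
  · rfl
  · simp [not_nonempty_iff_eq_empty.1 hI, ← Set.singleton_zero]

section ProductFamily

variable {ι κ E F : Type*} [AddCommGroup E] [MeasureSpace E]
  [NormedAddCommGroup F] [NormedSpace ℝ F] [MeasureSpace F] [BorelSpace F]
  [FiniteDimensional ℝ F] [(volume : Measure F).IsAddHaarMeasure] {P : ι → Set E} {S : Set F}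

theorem volume_sum_disjSum_sumElim_prod (hS : Convex ℝ S) (hSne : S.Nonempty)
    (A : Finset ι) (B : Finset κ) :
    (volume (∑ i ∈ A.disjSum B, Sum.elim (fun j => P j ×ˢ S)
        (fun _ => ({0} : Set E) ×ˢ S) i)).toReal
      = (volume (∑ j ∈ A, P j)).toReal * (volume S).toReal * (#A + #B) ^ Module.finrank ℝ F := by
  rw [sum_disjSum_sumElim_prod P hS hSne, Measure.volume_eq_prod, Measure.prod_prod,
    Measure.addHaar_smul_of_nonneg _ (by positivity), ENNReal.toReal_mul, ENNReal.toReal_mul,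
    ENNReal.toReal_ofReal (by positivity)]
  ring

theorem mixedVol_sumElim_prod [Fintype ι] [Fintype κ] [NullSingletonClass (volume : Measure E)] (hS : Convex ℝ S)
    (hSne : S.Nonempty) (hκ : Fintype.card κ = Module.finrank ℝ F) :
    mixedVol (Sum.elim (fun j => P j ×ˢ S) (fun _ : κ => ({0} : Set E) ×ˢ S))
      = (Fintype.card κ).factorial * (volume S).toReal * mixedVol P := by
  have : NullSingletonClass (volume : Measure (E × F)) := Measure.prod.instNullSingletonClass_fst
  have hsign (A : Finset ι) (B : Finset κ) :
      (-1 : ℝ) ^ (Fintype.card (ι ⊕ κ) - #(A.disjSum B))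
        = (-1) ^ (Fintype.card ι - #A) * (-1) ^ (Fintype.card κ - #B) := by
    rw [← pow_add, Fintype.card_sum, card_disjSum]
    have := A.card_le_univ
    have := B.card_le_univ
    congr 1
    omega
  calc mixedVol (Sum.elim (fun j => P j ×ˢ S) (fun _ : κ => ({0} : Set E) ×ˢ S))
      = ∑ A : Finset ι, (-1) ^ (Fintype.card ι - #A) * (volume (∑ j ∈ A, P j)).toReal *
          ((volume S).toReal *
            ∑ B : Finset κ, (-1) ^ (Fintype.card κ - #B) * (#A + #B : ℝ) ^ Fintype.card κ) := by
        rw [mixedVol_eq_sum, ← sumEquiv.symm.toEquiv.sum_comp, Fintype.sum_prod_type]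
        refine sum_congr rfl fun A _ => ?_
        rw [mul_sum, mul_sum]
        refine sum_congr rfl fun B _ => ?_
        simp only [OrderIso.coe_toEquiv, sumEquiv_symm_apply]
        rw [hsign, volume_sum_disjSum_sumElim_prod hS hSne, ← hκ]
        ring
    _ = (Fintype.card κ).factorial * (volume S).toReal * mixedVol P := by
        simp_rw [sum_finset_neg_one_pow_mul_add_card_pow, mixedVol_eq_sum P, mul_sum]
        exact sum_congr rfl fun A _ => by ring

end ProductFamily

def cornerSimplex (n : ℕ) (c : ℝ) : Set (Fin n → ℝ) := {x | (∀ i, 0 ≤ x i) ∧ ∑ i, x i ≤ c}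

theorem cornerSimplex_eq_empty {n : ℕ} {c : ℝ} (hc : c < 0) : cornerSimplex n c = ∅ :=
  Set.eq_empty_of_forall_notMem fun _ ⟨hx, hsum⟩ =>
    (hc.trans_le (sum_nonneg fun i _ => hx i)).not_ge hsum

theorem integral_Icc_sub_pow_div_factorial (n : ℕ) {c : ℝ} (hc : 0 ≤ c) :
    ∫ t in Set.Icc 0 c, (c - t) ^ n / n.factorial = c ^ (n + 1) / (n + 1).factorial := by
  rw [integral_Icc_eq_integral_Ioc, ← intervalIntegral.integral_of_le hc,
    intervalIntegral.integral_div, intervalIntegral.integral_comp_sub_left (· ^ n), integral_pow,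
    Nat.factorial_succ]
  push_cast
  field_simp
  ring

theorem volume_cornerSimplex (n : ℕ) {c : ℝ} (hc : 0 ≤ c) :
    volume (cornerSimplex n c) = ENNReal.ofReal (c ^ n / n.factorial) := by
  induction n generalizing c with
  | zero =>
    have : cornerSimplex 0 c = Set.univ :=
      Set.eq_univ_of_forall fun x => by simp [cornerSimplex, hc]
    rw [this, volume_pi, Measure.pi_univ]
    simp
  | succ n ih =>
    set T : Set (ℝ × (Fin n → ℝ)) := {p | 0 ≤ p.1 ∧ p.2 ∈ cornerSimplex n (c - p.1)}
    have hT : MeasurableSet T := by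
      simp only [T, cornerSimplex, Set.mem_ofPred_eq]
      measurability
    have hpre : MeasurableEquiv.piFinSuccAbove (fun _ => ℝ) 0 ⁻¹' T = cornerSimplex (n + 1) c := by
      ext x
      simp [T, cornerSimplex, Fin.forall_fin_succ, Fin.sum_univ_succ, Fin.tail,
        le_sub_iff_add_le', and_assoc]
    have hslice (t : ℝ) : volume (Prod.mk t ⁻¹' T) =
        (Set.Icc 0 c).indicator (fun t => ENNReal.ofReal ((c - t) ^ n / n.factorial)) t := by
      by_cases ht : 0 ≤ t
      · rcases le_or_gt t c with htc | htc
        · simp [T, ht, htc, ih (sub_nonneg.2 htc)]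
        · simp [T, ht, htc.not_ge, cornerSimplex_eq_empty (sub_neg.2 htc)]
      · simp [T, ht]
    rw [← hpre, (volume_preserving_piFinSuccAbove (fun _ => ℝ) 0).measure_preimage
        hT.nullMeasurableSet,
      Measure.volume_eq_prod, Measure.prod_apply hT, lintegral_congr hslice,
      lintegral_indicator measurableSet_Icc, ← ofReal_integral_eq_lintegral_ofReal,
      integral_Icc_sub_pow_div_factorial n hc]
    · exact (by fun_prop : Continuous fun t : ℝ => (c - t) ^ n / n.factorial).integrableOn_Icc
    · filter_upwards [ae_restrict_mem measurableSet_Icc] with t ht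
      have : 0 ≤ c - t := sub_nonneg.2 ht.2
      positivity

theorem funLeft_succ_image_stdSimplex (n : ℕ) :
    LinearMap.funLeft ℝ ℝ Fin.succ '' stdSimplex ℝ (Fin (n + 1)) = cornerSimplex n 1 := by
  ext x
  constructor
  · rintro ⟨y, ⟨hy, hsum⟩, rfl⟩
    refine ⟨fun i => hy i.succ, ?_⟩
    rw [Fin.sum_univ_succ] at hsum
    simpa [LinearMap.funLeft] using (le_add_of_nonneg_left (hy 0)).trans_eq hsum
  · rintro ⟨hx, hsum⟩
    refine ⟨Fin.cons (1 - ∑ i, x i) x, ⟨fun i => Fin.cases (sub_nonneg.2 hsum) hx i, ?_⟩, ?_⟩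
    · simp [Fin.sum_univ_succ]
    · ext i
      simp [LinearMap.funLeft]

theorem unitSimplex_eq_cornerSimplex (n : ℕ) : unitSimplex n = cornerSimplex n 1 := by
  classical
  rw [← funLeft_succ_image_stdSimplex, ← convexHull_basis_eq_stdSimplex,
    LinearMap.image_convexHull, ← Set.range_comp, Fin.range_fin_succ, unitSimplex]
  congr 3
  ext i j
  simp [LinearMap.funLeft, Pi.single_apply, Fin.tail, eq_comm]

theorem mixedVol_shifted_eq_general (n : ℕ) (hn : 1 ≤ n)
    (P : Fin n → Set (Fin n → ℝ))
    (Py Sy : Fin n → Set ((Fin n → ℝ) × (Fin n → ℝ)))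
    (hSy : ∀ j, Sy j = (fun y => ((0 : Fin n → ℝ), y)) '' unitSimplex n)
    (hPy : ∀ j, Py j =
      ((fun x => (x, (0 : Fin n → ℝ))) '' P j) +
        ((fun y => ((0 : Fin n → ℝ), y)) '' unitSimplex n)) :
    mixedVol (Sum.elim Py Sy : Fin n ⊕ Fin n → Set ((Fin n → ℝ) × (Fin n → ℝ)))
      = mixedVol P := by
  have : Nonempty (Fin n) := ⟨⟨0, hn⟩⟩
  have hPy' : Py = fun j => P j ×ˢ unitSimplex n := funext fun j => by
    rw [hPy j, ← Set.prod_singleton, ← Set.singleton_prod, Set.prod_add_prod_comm,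
      Set.singleton_zero, add_zero, zero_add]
  have hSy' : Sy = fun _ => {0} ×ˢ unitSimplex n := funext fun j => by
    rw [hSy j, Set.singleton_prod]
  have hS : Convex ℝ (unitSimplex n) := convex_convexHull ℝ _
  have hS0 : (0 : Fin n → ℝ) ∈ unitSimplex n := subset_convexHull ℝ _ (Set.mem_insert _ _)
  rw [hPy', hSy', mixedVol_sumElim_prod hS ⟨0, hS0⟩ (by simp),
    unitSimplex_eq_cornerSimplex, volume_cornerSimplex n zero_le_one]
  simp [field]

/-- Lemma (Lemma 3.6 of the paper): for polytopes `P_1, …, P_n ⊆ ℝ^n`, setting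
`P_j^y = (P_j × {0}) + ({0} × S_n) ⊆ ℝ^n × ℝ^n` and `S_n^y = {0} × S_n`, one has
`MV_{2n}(P_1^y, …, P_n^y, S_n^y, …, S_n^y) = MV_n(P_1, …, P_n)` (with `n` copies
of `S_n^y`). -/
theorem mixedVol_shifted_eq (n : ℕ) (hn : 1 ≤ n)
    (P : Fin n → Set (Fin n → ℝ)) (hP : ∀ j, IsPolytope (P j))
    (Py Sy : Fin n → Set ((Fin n → ℝ) × (Fin n → ℝ)))
    (hSy : ∀ j, Sy j = (fun y => ((0 : Fin n → ℝ), y)) '' unitSimplex n)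
    (hPy : ∀ j, Py j =
      ((fun x => (x, (0 : Fin n → ℝ))) '' P j) +
        ((fun y => ((0 : Fin n → ℝ), y)) '' unitSimplex n)) :
    mixedVol (Sum.elim Py Sy : Fin n ⊕ Fin n → Set ((Fin n → ℝ) × (Fin n → ℝ)))
      = mixedVol P :=
  mixedVol_shifted_eq_general n hn P Py Sy hSy hPy
end

section
/- Let R be a commutative ring and let Φ be an (m+m'+1)×(m+m') matrix over R built from an (m+1)×m matrix A and an (m'+1)×m' matrix B as follows: rows 1, ..., m+1 of Φ contain A in the first m columns and 0 elsewhere, and rows m+1, ..., m+m'+1 contain B in the last m' columns and 0 elsewhere, the two blocks overlapping in row m+1. Then every maximal minor of Φ (of size m+m'), obtained by deleting one row, is, up to sign, a product of a maximal minor of A and a maximal minor of B. -/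
lemma sa_val {n : ℕ} (p : Fin (n+1)) (i : Fin n) :
    (p.succAbove i).1 = if i.1 < p.1 then i.1 else i.1 + 1 := by
  rcases Fin.lt_or_le (Fin.castSucc i) p with h | h
  · have hv : i.1 < p.1 := h
    rw [Fin.succAbove_of_castSucc_lt _ _ h, if_pos hv]; rfl
  · have hv : ¬ i.1 < p.1 := by rw [Fin.le_def] at h; simp at h; omega
    rw [Fin.succAbove_of_le_castSucc _ _ h, if_neg hv]; rfl

/-- Every maximal minor (obtained by deleting one row) of the concatenated
block matrix `Φ`, whose rows `0…m` carry `A` in the first `m` columns and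
whose rows `m…m+m'` carry `B` in the last `m'` columns (all other entries `0`,
the row `m` being shared), is, up to sign, the product of a maximal minor of
`A` and a maximal minor of `B`. -/
theorem maximal_minor_of_glued_matrix {R : Type*} [CommRing R]
    (m m' : ℕ) (hm : 1 ≤ m) (hm' : 1 ≤ m')
    (A : Matrix (Fin (m + 1)) (Fin m) R)
    (B : Matrix (Fin (m' + 1)) (Fin m') R)
    (Φ : Matrix (Fin (m + m' + 1)) (Fin (m + m')) R)
    (hΦ : ∀ (i : Fin (m + m' + 1)) (j : Fin (m + m')),
      Φ i j =
        if hij : i.1 ≤ m ∧ j.1 < m then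
          A ⟨i.1, by omega⟩ ⟨j.1, hij.2⟩
        else if hij' : m ≤ i.1 ∧ m ≤ j.1 then
          B ⟨i.1 - m, by omega⟩ ⟨j.1 - m, by omega⟩
        else 0) :
    ∀ r : Fin (m + m' + 1), ∃ (i : Fin (m + 1)) (i' : Fin (m' + 1)),
      (Φ.submatrix r.succAbove id).det
          = (A.submatrix i.succAbove id).det * (B.submatrix i'.succAbove id).det
        ∨ (Φ.submatrix r.succAbove id).det
          = -((A.submatrix i.succAbove id).det * (B.submatrix i'.succAbove id).det) := by
  intro r
  rw [← Matrix.det_submatrix_equiv_self finSumFinEquiv (Φ.submatrix r.succAbove id)]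
  by_cases hr : r.1 ≤ m
  · refine ⟨⟨r.1, by omega⟩, 0, Or.inl ?_⟩
    have key : (Φ.submatrix r.succAbove id).submatrix finSumFinEquiv finSumFinEquiv
        = Matrix.fromBlocks (A.submatrix (⟨r.1, by omega⟩ : Fin (m+1)).succAbove id)
            (Matrix.of fun x y => Φ (r.succAbove (finSumFinEquiv (Sum.inl x)))
              (finSumFinEquiv (Sum.inr y)))
            0 (B.submatrix (0 : Fin (m' + 1)).succAbove id) := by
      ext i j
      cases i with
      | inl x =>
        cases j with
        | inl y =>
          simp only [Matrix.submatrix_apply, Matrix.fromBlocks_apply₁₁, id_eq,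
            finSumFinEquiv_apply_left]
          rw [hΦ]
          have hrow : (r.succAbove (Fin.castAdd m' x)).1 ≤ m := by
            rw [sa_val]; simp only [Fin.coe_castAdd]; split <;> omega
          rw [dif_pos ⟨hrow, by simpa using y.2⟩]
          refine congrArg₂ A (Fin.ext ?_) (Fin.ext ?_)
          · simp only [sa_val, Fin.coe_castAdd]
          · simp
        | inr y =>
          simp [Matrix.fromBlocks_apply₁₂]
      | inr x =>
        cases j with
        | inl y =>
          simp only [Matrix.submatrix_apply, Matrix.fromBlocks_apply₂₁, id_eq,
            finSumFinEquiv_apply_left, finSumFinEquiv_apply_right, Matrix.zero_apply]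
          rw [hΦ]
          have hrow : (r.succAbove (Fin.natAdd m x)).1 = m + x.1 + 1 := by
            rw [sa_val]; simp only [Fin.coe_natAdd]; split <;> omega
          rw [dif_neg (by rw [hrow]; omega), dif_neg (by simp only [Fin.coe_castAdd]; omega)]
        | inr y =>
          simp only [Matrix.submatrix_apply, Matrix.fromBlocks_apply₂₂, id_eq,
            finSumFinEquiv_apply_right]
          rw [hΦ]
          have hrow : (r.succAbove (Fin.natAdd m x)).1 = m + x.1 + 1 := by
            rw [sa_val]; simp only [Fin.coe_natAdd]; split <;> omega
          rw [dif_neg (by rw [hrow]; simp only [Fin.coe_natAdd]; omega),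
            dif_pos ⟨by rw [hrow]; omega, by simp⟩]
          refine congrArg₂ B (Fin.ext ?_) (Fin.ext ?_)
          · simp only [hrow, sa_val, Fin.val_zero, Nat.not_lt_zero, if_false]
            omega
          · simp only [Fin.coe_natAdd, id_eq]; omega
    rw [key, Matrix.det_fromBlocks_zero₂₁]
  · refine ⟨Fin.last m, ⟨r.1 - m, by omega⟩, Or.inl ?_⟩
    have key : (Φ.submatrix r.succAbove id).submatrix finSumFinEquiv finSumFinEquiv
        = Matrix.fromBlocks (A.submatrix (Fin.last m).succAbove id) 0
            (Matrix.of fun x y => Φ (r.succAbove (finSumFinEquiv (Sum.inr x)))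
              (finSumFinEquiv (Sum.inl y)))
            (B.submatrix (⟨r.1 - m, by omega⟩ : Fin (m'+1)).succAbove id) := by
      ext i j
      cases i with
      | inl x =>
        cases j with
        | inl y =>
          simp only [Matrix.submatrix_apply, Matrix.fromBlocks_apply₁₁, id_eq,
            finSumFinEquiv_apply_left]
          rw [hΦ]
          have hrow : (r.succAbove (Fin.castAdd m' x)).1 = x.1 := by
            rw [sa_val]; simp only [Fin.coe_castAdd]; split <;> omega
          rw [dif_pos ⟨by omega, by simpa using y.2⟩]
          refine congrArg₂ A (Fin.ext ?_) (Fin.ext ?_)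
          · simp only [hrow, sa_val, Fin.val_last]
            split <;> omega
          · simp
        | inr y =>
          simp only [Matrix.submatrix_apply, Matrix.fromBlocks_apply₁₂, id_eq,
            finSumFinEquiv_apply_left, finSumFinEquiv_apply_right, Matrix.zero_apply]
          rw [hΦ]
          have hrow : (r.succAbove (Fin.castAdd m' x)).1 = x.1 := by
            rw [sa_val]; simp only [Fin.coe_castAdd]; split <;> omega
          rw [dif_neg (by simp only [Fin.coe_natAdd]; omega),
            dif_neg (by rw [hrow]; simp only [Fin.coe_natAdd]; omega)]
      | inr x =>
        cases j with
        | inl y =>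
          simp [Matrix.fromBlocks_apply₂₁]
        | inr y =>
          simp only [Matrix.submatrix_apply, Matrix.fromBlocks_apply₂₂, id_eq,
            finSumFinEquiv_apply_right]
          rw [hΦ]
          have hrow : (r.succAbove (Fin.natAdd m x)).1
              = if m + x.1 < r.1 then m + x.1 else m + x.1 + 1 := by
            rw [sa_val]; simp only [Fin.coe_natAdd]
          rw [dif_neg (by simp only [Fin.coe_natAdd]; omega),
            dif_pos ⟨by rw [hrow]; split <;> omega, by simp⟩]
          refine congrArg₂ B (Fin.ext ?_) (Fin.ext ?_)
          · simp only [hrow, sa_val]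
            split <;> split <;> omega
          · simp only [Fin.coe_natAdd, id_eq]; omega
    rw [key, Matrix.det_fromBlocks_zero₁₂]
end

section
/- Let S = k[x_0, …, x_n, y_0, …, y_n] with the bigrading deg(x_i) = (1,0), deg(y_i) = (0,1), and let h_1, …, h_n be the binomials h_i = x_{i−1}y_{i−1} − x_i y_i. Then h_1, …, h_n form a regular sequence in S. -/
/-!
After `h_1, …, h_i` the variables `x_{i+1}, y_{i+1}` have not occurred yet, and `h_{i+1}` is
`z - x_{i+1} y_{i+1}` with `z = x_i y_i` also free of them. Writing `S = A[x_{i+1}][y_{i+1}]`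
with `A` the polynomial ring in the remaining variables, the ideal `(h_1, …, h_i)` is extended
from an ideal `J` of `A`, so `S / (h_1, …, h_i) ≅ (A/J)[x_{i+1}][y_{i+1}]`. There `h_{i+1}` is
linear in `y_{i+1}` with leading coefficient `-x_{i+1}`, a nonzerodivisor, hence it is itself a
nonzerodivisor. Finally all `h_i` vanish at the origin, so they generate a proper ideal.
-/

open MvPolynomial

theorem RingHom.mem_ker_of_mul_mem_ker {A B : Type*} [Semiring A] [Semiring B] (ψ : A →+* B)
    {p f : A} (hp : ψ p ∈ nonZeroDivisors B) (h : p * f ∈ RingHom.ker ψ) : f ∈ RingHom.ker ψ :=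
  hp.1 _ (by rwa [RingHom.mem_ker, map_mul] at h)

namespace Polynomial

variable {R : Type*} [CommRing R]

theorem C_sub_C_mul_X_mem_nonZeroDivisors {b : R} (hb : b ∈ nonZeroDivisors R) (a : R) :
    C a - C b * X ∈ nonZeroDivisors R[X] := by
  nontriviality R
  have hb' : -b ∈ nonZeroDivisors R := mem_nonZeroDivisors_iff_right.mpr fun x hx =>
    mem_nonZeroDivisors_iff_right.mp hb x (by simpa using hx)
  apply mem_nonZeroDivisors_of_leadingCoeff
  rwa [sub_eq_add_neg, add_comm, ← neg_mul, ← C_neg,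
    leadingCoeff_linear (nonZeroDivisors.ne_zero hb')]

theorem C_C_sub_C_X_mul_X_mem_nonZeroDivisors (a : R) :
    C (C a) - C X * X ∈ nonZeroDivisors R[X][X] :=
  C_sub_C_mul_X_mem_nonZeroDivisors (R := R[X]) X_mem_nonzeroDivisors _

theorem mem_map_C_map_C_of_C_C_sub_C_X_mul_X_mul_mem {J : Ideal R} {a : R} {f : R[X][X]}
    (h : (C (C a) - C X * X) * f ∈ (J.map C).map C) : f ∈ (J.map C).map C := by
  have hker : RingHom.ker (mapRingHom (mapRingHom (Ideal.Quotient.mk J))) = (J.map C).map C := by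
    rw [ker_mapRingHom, ker_mapRingHom, Ideal.mk_ker]
  rw [← hker] at h ⊢
  refine RingHom.mem_ker_of_mul_mem_ker _ ?_ h
  simpa using C_C_sub_C_X_mul_X_mem_nonZeroDivisors (Ideal.Quotient.mk J a)

end Polynomial

section TwoVariables

variable {σ : Type*} {u v : σ}

def Equiv.optionOptionComplPair [DecidableEq σ] (huv : u ≠ v) :
    σ ≃ Option (Option ↥({u, v}ᶜ : Set σ)) where
  toFun w :=
    if hv : w = v then none
    else if hu : w = u then some none
    else some (some ⟨w, by simp_all⟩)
  invFun
    | none => v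
    | some none => u
    | some (some w) => w
  left_inv w := by
    by_cases hv : w = v
    · simp [hv]
    · by_cases hu : w = u <;> simp [hv, hu, huv]
  right_inv
    | none => by simp
    | some none => by simp [huv]
    | some (some ⟨w, hw⟩) => by
      simp only [Set.mem_compl_iff, Set.mem_insert_iff, Set.mem_singleton_iff, not_or] at hw
      simp [hw]

namespace MvPolynomial

theorem X_mul_X_mem_supported {R : Type*} [CommSemiring R] {s : Set σ} {a b : σ} (ha : a ∈ s)
    (hb : b ∈ s) : X a * X b ∈ supported R s :=
  mul_mem (Algebra.subset_adjoin ⟨a, ha, rfl⟩) (Algebra.subset_adjoin ⟨b, hb, rfl⟩)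

section PairEquivLeft

variable (R : Type*) [CommRing R] [DecidableEq σ] (huv : u ≠ v)

noncomputable def pairEquivLeft :
    MvPolynomial σ R ≃ₐ[R] Polynomial (Polynomial (MvPolynomial ↥({u, v}ᶜ : Set σ) R)) :=
  (renameEquiv R (Equiv.optionOptionComplPair huv)).trans <|
    (optionEquivLeft R _).trans (Polynomial.mapAlgEquiv (optionEquivLeft R _))

theorem pairEquivLeft_X_fst : pairEquivLeft R huv (X u) = Polynomial.C Polynomial.X := by
  simp [pairEquivLeft, Equiv.optionOptionComplPair, huv]

theorem pairEquivLeft_X_snd : pairEquivLeft R huv (X v) = Polynomial.X := by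
  simp [pairEquivLeft, Equiv.optionOptionComplPair]

theorem pairEquivLeft_rename (p : MvPolynomial ↥({u, v}ᶜ : Set σ) R) :
    pairEquivLeft R huv (rename Subtype.val p) = Polynomial.C (Polynomial.C p) := by
  induction p using MvPolynomial.induction_on with
  | C a => simp [pairEquivLeft]
  | add p q hp hq => simp_all
  | mul_X p w hp =>
    obtain ⟨w, hw⟩ := w
    simp only [Set.mem_compl_iff, Set.mem_insert_iff, Set.mem_singleton_iff, not_or] at hw
    simp_all [pairEquivLeft, Equiv.optionOptionComplPair]

theorem map_span_rename_pairEquivLeft (G : Set (MvPolynomial ↥({u, v}ᶜ : Set σ) R)) :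
    (Ideal.span (rename Subtype.val '' G)).map (pairEquivLeft R huv) =
      ((Ideal.span G).map Polynomial.C).map Polynomial.C := by
  rw [Ideal.map_span, Ideal.map_span, Ideal.map_span, ← Set.image_comp, ← Set.image_comp]
  exact congrArg Ideal.span (Set.image_congr fun g _ => pairEquivLeft_rename R huv g)

end PairEquivLeft

theorem mem_span_of_sub_X_mul_X_mul_mem_span {R : Type*} [CommRing R] (huv : u ≠ v)
    {G : Set (MvPolynomial σ R)} (hG : G ⊆ supported R {u, v}ᶜ) {z : MvPolynomial σ R}
    (hz : z ∈ supported R {u, v}ᶜ) {f : MvPolynomial σ R}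
    (h : (z - X u * X v) * f ∈ Ideal.span G) : f ∈ Ideal.span G := by
  classical
  rw [supported_eq_range_rename] at hG hz
  rw [AlgHom.coe_range] at hG
  obtain ⟨z, rfl⟩ := (AlgHom.mem_range _).mp hz
  rw [← Set.image_preimage_eq_of_subset hG] at h ⊢
  rw [← Ideal.apply_mem_of_equiv_iff (f := (pairEquivLeft R huv).toRingEquiv)] at h ⊢
  change pairEquivLeft R huv _ ∈ Ideal.map (pairEquivLeft R huv) _ at h ⊢
  rw [map_span_rename_pairEquivLeft, map_mul, map_sub, map_mul, pairEquivLeft_X_fst,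
    pairEquivLeft_X_snd, pairEquivLeft_rename] at h
  rw [map_span_rename_pairEquivLeft]
  exact Polynomial.mem_map_C_map_C_of_C_C_sub_C_X_mul_X_mul_mem h

end MvPolynomial

end TwoVariables

section Cremona

open RingTheory.Sequence

variable (k : Type*) [CommRing k] (n : ℕ)

/-- `x_j` is `X (Sum.inl j)` and `y_j` is `X (Sum.inr j)`; the paper's `h_{i+1}` is
`cremonaBinomial k n i`, as indices start at `0` here. -/
noncomputable def cremonaBinomial (i : Fin n) : MvPolynomial (Fin (n + 1) ⊕ Fin (n + 1)) k :=
  X (Sum.inl i.castSucc) * X (Sum.inr i.castSucc) - X (Sum.inl i.succ) * X (Sum.inr i.succ)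

variable {k n}

theorem cremonaBinomial_mem_supported {i j : Fin n} (hji : j < i) :
    cremonaBinomial k n j ∈ supported k {Sum.inl i.succ, Sum.inr i.succ}ᶜ := by
  have hji' := Fin.lt_def.mp hji
  refine sub_mem (X_mul_X_mem_supported ?_ ?_) (X_mul_X_mem_supported ?_ ?_) <;>
    simp [Fin.ext_iff] <;> omega

theorem mem_ofList_take_of_cremonaBinomial_mul_mem (i : Fin n)
    {f : MvPolynomial (Fin (n + 1) ⊕ Fin (n + 1)) k}
    (h : cremonaBinomial k n i * f ∈ Ideal.ofList ((List.ofFn (cremonaBinomial k n)).take i)) :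
    f ∈ Ideal.ofList ((List.ofFn (cremonaBinomial k n)).take i) := by
  refine mem_span_of_sub_X_mul_X_mul_mem_span (by simp) ?_ ?_ h
  · intro g hg
    obtain ⟨j, hj, rfl⟩ := List.mem_take_iff_getElem.mp hg
    rw [List.getElem_ofFn]
    exact cremonaBinomial_mem_supported (Fin.lt_def.mpr (lt_min_iff.mp hj).1)
  · exact X_mul_X_mem_supported (by simp [Fin.ext_iff]) (by simp [Fin.ext_iff])

theorem isWeaklyRegular_ofFn_cremonaBinomial :
    IsWeaklyRegular (MvPolynomial (Fin (n + 1) ⊕ Fin (n + 1)) k)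
      (List.ofFn (cremonaBinomial k n)) := by
  refine ⟨fun i hi => ?_⟩
  rw [List.length_ofFn] at hi
  rw [Ideal.smul_eq_mul, Ideal.mul_top, isSMulRegular_quotient_iff_mem_of_smul_mem]
  intro f hf
  rw [List.getElem_ofFn, smul_eq_mul] at hf
  exact mem_ofList_take_of_cremonaBinomial_mul_mem ⟨i, hi⟩ hf

theorem ofList_cremonaBinomial_le_ker_constantCoeff :
    Ideal.ofList (List.ofFn (cremonaBinomial k n)) ≤ RingHom.ker constantCoeff :=
  Ideal.span_le.mpr fun g hg => by
    obtain ⟨j, rfl⟩ := List.mem_ofFn.mp hg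
    simp [cremonaBinomial]

theorem isRegular_ofFn_cremonaBinomial [Nontrivial k] :
    IsRegular (MvPolynomial (Fin (n + 1) ⊕ Fin (n + 1)) k) (List.ofFn (cremonaBinomial k n)) := by
  refine ⟨isWeaklyRegular_ofFn_cremonaBinomial, fun htop => ?_⟩
  rw [Ideal.smul_eq_mul, Ideal.mul_top] at htop
  exact RingHom.ker_ne_top _ (top_le_iff.mp (htop ▸ ofList_cremonaBinomial_le_ker_constantCoeff))

end Cremona

theorem standard_cremona_graph_regular_sequence_general
    (k : Type*) [Field k] (n : ℕ) :
    RingTheory.Sequence.IsRegular (MvPolynomial (Fin (n + 1) ⊕ Fin (n + 1)) k)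
      (List.ofFn fun i : Fin n =>
        (X (Sum.inl i.castSucc) * X (Sum.inr i.castSucc)
          - X (Sum.inl i.succ) * X (Sum.inr i.succ) :
            MvPolynomial (Fin (n + 1) ⊕ Fin (n + 1)) k)) :=
  isRegular_ofFn_cremonaBinomial

/-- In `S = k[x_0, …, x_n, y_0, …, y_n]`, the binomials
`h_i = x_{i-1} y_{i-1} - x_i y_i` (`i = 1, …, n`) form a regular sequence.
The `x`-variables are indexed by `Sum.inl`, the `y`-variables by `Sum.inr`. -/
theorem standard_cremona_graph_regular_sequence
    (k : Type*) [Field k] (n : ℕ) (hn : 1 ≤ n) :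
    RingTheory.Sequence.IsRegular (MvPolynomial (Fin (n + 1) ⊕ Fin (n + 1)) k)
      (List.ofFn fun i : Fin n =>
        (X (Sum.inl i.castSucc) * X (Sum.inr i.castSucc)
          - X (Sum.inl i.succ) * X (Sum.inr i.succ) :
            MvPolynomial (Fin (n + 1) ⊕ Fin (n + 1)) k)) :=
  standard_cremona_graph_regular_sequence_general k n
end
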